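/- Let ε ∈ (0, 1/2] and suppose k players each independently play action 'one' with probability exactly 1/2 + ε/3, where k ≥ ln(6/ε)·(9/(2ε²)) and k is odd. Consider a player v whose payoff is 1 for action 'one' and 0 for action 'zero' when strictly more than k/2 of the k players play 'one', and 0 for 'one' and 1 for 'zero' otherwise. Then v's expected payoff from action 'zero' is at most ε/3 and from action 'one' is at least 1 - ε/3. -/
import Mathlib
open Finset

lemma reindex (k : ℕ) (p q : ℝ) (g : ℕ → ℝ) :
    ∑ a : Fin k → Bool,
        (∏ i, (if a i then p else q)) * g ((Finset.univ.filter (fun i => a i = true)).card)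
    = ∑ j ∈ range (k+1), (k.choose j : ℝ) * (p^j * q^(k-j) * g j) := by
  have key : ∀ a : Fin k → Bool,
      (∏ i, (if a i then p else q)) * g ((Finset.univ.filter (fun i => a i = true)).card)
      = (fun S : Finset (Fin k) => p ^ S.card * q ^ (k - S.card) * g S.card)
          (Finset.univ.filter (fun i => a i = true)) := by
    intro a
    simp only
    congr 1
    rw [Finset.prod_ite (f := fun _ => p) (g := fun _ => q), Finset.prod_const, Finset.prod_const]
    have hcard : (Finset.univ.filter (fun i => ¬ (a i = true))).card
        = k - (Finset.univ.filter (fun i => a i = true)).card := by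
      have := Finset.card_filter_add_card_filter_not (s := (Finset.univ : Finset (Fin k)))
        (p := fun i => a i = true)
      simp only [Finset.card_univ, Fintype.card_fin] at this
      omega
    rw [hcard]
  have hb : Function.Bijective
      (fun a : Fin k → Bool => Finset.univ.filter (fun i => a i = true)) := by
    constructor
    · intro a b h
      funext i
      have := Finset.ext_iff.1 h i
      simp only [Finset.mem_filter, Finset.mem_univ, true_and] at this
      cases ha : a i <;> cases hb' : b i <;> simp_all
    · intro S
      exact ⟨fun i => decide (i ∈ S), by ext i; simp⟩
  rw [Fintype.sum_bijective _ hb _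
    (fun S : Finset (Fin k) => p ^ S.card * q ^ (k - S.card) * g S.card) key]
  rw [← Finset.powerset_univ, Finset.sum_powerset]
  simp only [Finset.card_univ, Fintype.card_fin]
  refine Finset.sum_congr rfl fun j hj => ?_
  rw [Finset.sum_powersetCard j Finset.univ (fun n => p ^ n * q ^ (k - n) * g n)]
  simp [Finset.card_univ, nsmul_eq_mul, mul_assoc]


lemma tail_exp (ε : ℝ) (hε0 : 0 < ε) (hεhalf : ε ≤ 1/2) (m k : ℕ) (hm : k = 2*m+1)
    (hk : (k : ℝ) ≥ Real.log (6 / ε) * (9 / (2 * ε ^ 2))) :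
    Real.exp (-(4*(ε/3)^2) * m) ≤ ε / 3 := by
  have main : -(4*(ε/3)^2) * m ≤ Real.log (ε/3) := ?_
  · calc Real.exp (-(4*(ε/3)^2) * m) ≤ Real.exp (Real.log (ε/3)) := Real.exp_le_exp.2 main
      _ = ε/3 := Real.exp_log (by linarith)
  have hlog3 : Real.log (ε/3) = Real.log ε - Real.log 3 :=
    Real.log_div hε0.ne' (by norm_num)
  have hlog6 : Real.log (6/ε) = Real.log 2 + Real.log 3 - Real.log ε := by
    rw [Real.log_div (by norm_num) hε0.ne', show (6:ℝ) = 2*3 by norm_num,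
      Real.log_mul (by norm_num) (by norm_num)]
  have hε2 : 0 < ε^2 := by positivity
  have hk' : (Real.log 2 + Real.log 3 - Real.log ε) ≤ (k:ℝ) * (2*ε^2/9) := by
    have h := hk
    rw [hlog6] at h
    have h2 := mul_le_mul_of_nonneg_right h (by positivity : (0:ℝ) ≤ 2*ε^2/9)
    calc Real.log 2 + Real.log 3 - Real.log ε
        = (Real.log 2 + Real.log 3 - Real.log ε) * (9/(2*ε^2)) * (2*ε^2/9) := by
          field_simp
      _ ≤ (k:ℝ) * (2*ε^2/9) := h2
  have hkm : (k:ℝ) = 2*(m:ℝ) + 1 := by rw [hm]; push_cast; ring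
  rw [hkm] at hk'
  rw [hlog3]
  have hlog2 : (0.6931471803 : ℝ) < Real.log 2 := Real.log_two_gt_d9
  have hεsq : ε^2 ≤ 1/4 := by nlinarith
  nlinarith

/-- `k` players (with `k` odd, `k ≥ ln(6/ε)·(9/(2ε²))`) independently play
action `one` with probability exactly `1/2 + ε/3`.  Player `v` gets payoff 1 for `one`
and 0 for `zero` when strictly more than `k/2` of them play `one`, and payoff 0 for
`one` / 1 for `zero` otherwise.  Then `v`'s expected payoff from `zero` is at most `ε/3`
and from `one` is at least `1 - ε/3`.  Expected payoffs are written out explicitly as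
sums over the `2^k` pure action profiles (`a i = true` meaning player `i` plays `one`). -/
theorem stmt_11 (ε : ℝ) (hε : ε ∈ Set.Ioc (0 : ℝ) (1 / 2)) (k : ℕ)
    (hk : (k : ℝ) ≥ Real.log (6 / ε) * (9 / (2 * ε ^ 2))) (hodd : Odd k) :
    (∑ a : Fin k → Bool,
        (∏ i, (if a i then (1 / 2 + ε / 3 : ℝ) else (1 / 2 - ε / 3))) *
          (if 2 * (Finset.univ.filter (fun i => a i = true)).card > k then 0 else 1))
      ≤ ε / 3 ∧
    (∑ a : Fin k → Bool,
        (∏ i, (if a i then (1 / 2 + ε / 3 : ℝ) else (1 / 2 - ε / 3))) *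
          (if 2 * (Finset.univ.filter (fun i => a i = true)).card > k then 1 else 0))
      ≥ 1 - ε / 3 := by
  obtain ⟨hε0, hεhalf⟩ := hε
  obtain ⟨m, hm⟩ := hodd
  set p : ℝ := 1/2 + ε/3 with hp_def
  set q : ℝ := 1/2 - ε/3 with hq_def
  have hq : 0 < q := by rw [hq_def]; linarith
  have hp : 0 < p := by rw [hp_def]; linarith
  have hpq : q ≤ p := by rw [hp_def, hq_def]; linarith
  -- the three reindexed sums
  have h0 := reindex k p q (fun j => if 2*j > k then (0:ℝ) else 1)
  have h1 := reindex k p q (fun j => if 2*j > k then (1:ℝ) else 0)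
  have hT := reindex k p q (fun _ => (1:ℝ))
  beta_reduce at h0 h1 hT
  -- total = 1
  have htotal : ∑ j ∈ range (k+1), (k.choose j : ℝ) * (p^j * q^(k-j) * 1) = 1 := by
    have := add_pow p q k
    have hpq1 : p + q = 1 := by rw [hp_def, hq_def]; ring
    rw [hpq1, one_pow] at this
    exact Eq.trans (Finset.sum_congr rfl fun j _ => by ring) this.symm
  -- bound on the 'zero' payoff
  have hZ : ∑ j ∈ range (k+1), (k.choose j : ℝ) *
      (p^j * q^(k-j) * (if 2*j > k then (0:ℝ) else 1)) ≤ ε / 3 := by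
    have step1 : ∑ j ∈ range (k+1), (k.choose j : ℝ) *
        (p^j * q^(k-j) * (if 2*j > k then (0:ℝ) else 1))
        ≤ ∑ j ∈ range (k+1), (k.choose j : ℝ) * (p^m * q^(m+1)) := by
      refine Finset.sum_le_sum fun j hj => ?_
      by_cases hcase : 2*j > k
      · simp only [hcase, if_pos, mul_zero, mul_one]
        positivity
      · simp only [hcase, if_neg, not_false_iff, mul_one]
        have hjm : j ≤ m := by omega
        have hkj : k - j = (m - j) + (m+1) := by omega
        have key : p^j * q^(k-j) ≤ p^m * q^(m+1) := by
          rw [hkj, pow_add, ← mul_assoc]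
          have h1' : q ^ (m-j) ≤ p ^ (m-j) := pow_le_pow_left₀ hq.le hpq _
          have h2' : p^j * q^(m-j) ≤ p^j * p^(m-j) :=
            mul_le_mul_of_nonneg_left h1' (pow_nonneg hp.le j)
          have h3' : p^j * p^(m-j) = p^m := by
            rw [← pow_add]; congr 1; omega
          calc p^j * q^(m-j) * q^(m+1) ≤ p^j * p^(m-j) * q^(m+1) :=
                mul_le_mul_of_nonneg_right h2' (pow_nonneg hq.le _)
            _ = p^m * q^(m+1) := by rw [h3']
        have hC : (0:ℝ) ≤ (k.choose j : ℝ) := Nat.cast_nonneg _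
        exact mul_le_mul_of_nonneg_left key hC
    have step2 : ∑ j ∈ range (k+1), (k.choose j : ℝ) * (p^m * q^(m+1))
        = 2^k * (p^m * q^(m+1)) := by
      rw [← Finset.sum_mul]
      congr 1
      have := Nat.sum_range_choose k
      exact_mod_cast congrArg (Nat.cast : ℕ → ℝ) this
    have step3 : (2:ℝ)^k * (p^m * q^(m+1)) = (4*p*q)^m * (2*q) := by
      have h2k : (2:ℝ)^k = 2 * 4^m := by
        rw [hm, pow_succ, pow_mul]; norm_num; ring
      rw [h2k, mul_pow, mul_pow, pow_succ]; ring
    have h4pq : 4*p*q = 1 - 4*(ε/3)^2 := by rw [hp_def, hq_def]; ring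
    have hc1 : 0 ≤ 1 - 4*(ε/3)^2 := by nlinarith
    have step4 : (4*p*q)^m * (2*q) ≤ (1 - 4*(ε/3)^2)^m := by
      rw [h4pq]
      have h2q : 2*q ≤ 1 := by rw [hq_def]; linarith
      nlinarith [pow_nonneg hc1 m, mul_nonneg (pow_nonneg hc1 m) (by linarith : (0:ℝ) ≤ 2*q)]
    have step5 : (1 - 4*(ε/3)^2)^m ≤ Real.exp (-(4*(ε/3)^2)) ^ m := by
      refine pow_le_pow_left₀ hc1 ?_ m
      have := Real.add_one_le_exp (-(4*(ε/3)^2))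
      linarith
    have step6 : Real.exp (-(4*(ε/3)^2)) ^ m = Real.exp (-(4*(ε/3)^2) * m) := by
      rw [← Real.exp_nat_mul]; ring_nf
    have step7 : Real.exp (-(4*(ε/3)^2) * m) ≤ ε / 3 :=
      tail_exp ε hε0 hεhalf m k hm hk
    calc ∑ j ∈ range (k+1), (k.choose j : ℝ) *
          (p^j * q^(k-j) * (if 2*j > k then (0:ℝ) else 1))
        ≤ ∑ j ∈ range (k+1), (k.choose j : ℝ) * (p^m * q^(m+1)) := step1
      _ = 2^k * (p^m * q^(m+1)) := step2
      _ = (4*p*q)^m * (2*q) := step3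
      _ ≤ (1 - 4*(ε/3)^2)^m := step4
      _ ≤ Real.exp (-(4*(ε/3)^2)) ^ m := step5
      _ = Real.exp (-(4*(ε/3)^2) * m) := step6
      _ ≤ ε / 3 := step7
  constructor
  · rw [h0]; exact hZ
  · rw [h1]
    have hsub : ∑ j ∈ range (k+1), (k.choose j : ℝ) *
        (p^j * q^(k-j) * (if 2*j > k then (1:ℝ) else 0))
        = (∑ j ∈ range (k+1), (k.choose j : ℝ) * (p^j * q^(k-j) * 1))
          - ∑ j ∈ range (k+1), (k.choose j : ℝ) *
            (p^j * q^(k-j) * (if 2*j > k then (0:ℝ) else 1)) := by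
      rw [← Finset.sum_sub_distrib]
      refine Finset.sum_congr rfl fun j _ => ?_
      by_cases hcase : 2*j > k <;> simp [hcase]
    rw [hsub, htotal]
    linarith
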